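/- arXiv:1607.07067 — 2 statements merged into one kernel-verified Lean document; each statement's English description precedes it below -/
import Mathlib

section
/- Let f : ℤ² → V, let r ∈ ℤ², let K ∈ ℕ, and suppose (∂₁^m ∂₂^n f)(r) = 0 for all integers m, n ≥ 0 with m + n > K. If p is a V-valued polynomial function of total degree at most K such that p(r + i e₁ + j e₂) = f(r + i e₁ + j e₂) for all integers i, j ≥ 0 with i + j ≤ K, then f(s) = p(s) for every s ∈ ℤ² with s₁ ≥ r₁ and s₂ ≥ r₂. -/
open Finset Function fwdDiff

/-!
Put `g = f - p`. For every `N`, `g` vanishes at the points `r + (i, j)` with `i + j ≤ N` iff the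
mixed differences `∂₁^m ∂₂^n g (r)` with `m + n ≤ N` vanish: each family is a triangular
combination of the other. Differences of `g` of order `≤ K` vanish at `r` because `g` vanishes on
the triangle of size `K`; those of order `> K` vanish because they do for `f` by hypothesis and for
`p` identically, `p` having total degree `≤ K`. So all differences of `g` vanish at `r`, hence `g`
vanishes on triangles of every size, i.e. on the whole quadrant above `r`.
-/

/-- Difference derivative in direction `e₁` for functions on `ℤ²`. -/
def ddx {V : Type*} [AddCommGroup V] (f : ℤ × ℤ → V) : ℤ × ℤ → V :=
  fun s => f (s.1 + 1, s.2) - f s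

/-- Difference derivative in direction `e₂` for functions on `ℤ²`. -/
def ddy {V : Type*} [AddCommGroup V] (f : ℤ × ℤ → V) : ℤ × ℤ → V :=
  fun s => f (s.1, s.2 + 1) - f s

lemma ddx_eq_fwdDiff {V : Type*} [AddCommGroup V] :
    (ddx : (ℤ × ℤ → V) → ℤ × ℤ → V) = Δ_[((1 : ℤ), (0 : ℤ))] := by
  ext f ⟨a, b⟩; simp [ddx, fwdDiff]

lemma ddy_eq_fwdDiff {V : Type*} [AddCommGroup V] :
    (ddy : (ℤ × ℤ → V) → ℤ × ℤ → V) = Δ_[((0 : ℤ), (1 : ℤ))] := by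
  ext f ⟨a, b⟩; simp [ddy, fwdDiff]

section fwdDiff

variable {M G : Type*} [AddCommMonoid M] [AddCommGroup G]

lemma fwdDiff_comm (h k : M) (f : M → G) : Δ_[h] (Δ_[k] f) = Δ_[k] (Δ_[h] f) := by
  ext y
  simp only [fwdDiff, add_right_comm]
  abel

lemma fwdDiff_iter_comm (h k : M) (m n : ℕ) (f : M → G) :
    Δ_[h] ^[m] (Δ_[k] ^[n] f) = Δ_[k] ^[n] (Δ_[h] ^[m] f) :=
  Commute.iterate_iterate (fwdDiff_comm h k) m n f

lemma fwdDiff_iter_sub (h : M) (f g : M → G) (n : ℕ) :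
    Δ_[h] ^[n] (f - g) = Δ_[h] ^[n] f - Δ_[h] ^[n] g := by
  simpa only [fwdDiff_aux.coe_fwdDiffₗ_pow] using map_sub (fwdDiff_aux.fwdDiffₗ M G h ^ n) f g

lemma fwdDiff_iter_zero (h : M) (n : ℕ) : Δ_[h] ^[n] (0 : M → G) = 0 := by
  simpa only [fwdDiff_aux.coe_fwdDiffₗ_pow] using map_zero (fwdDiff_aux.fwdDiffₗ M G h ^ n)

lemma fwdDiff_iter_smul_const {R : Type*} [Ring R] [Module R G] (h : M) (φ : M → R) (g : G)
    (n : ℕ) : Δ_[h] ^[n] (fun y => φ y • g) = fun y => Δ_[h] ^[n] φ y • g := by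
  induction n generalizing φ with
  | zero => rfl
  | succ n ih => rw [iterate_succ_apply, fwdDiff_smul_const]; exact ih _

end fwdDiff

section Triangle

variable {M G : Type*} [AddCommMonoid M] [AddCommGroup G]

def VanishesOnTriangle (f : M → G) (y h k : M) (N : ℕ) : Prop :=
  ∀ i j : ℕ, i + j ≤ N → f (y + i • h + j • k) = 0

variable {f : M → G} {y h k : M} {N : ℕ}

namespace VanishesOnTriangle

lemma apply_base (hf : VanishesOnTriangle f y h k N) : f y = 0 := by
  simpa using hf 0 0 (Nat.zero_le N)

lemma fwdDiff_left (hf : VanishesOnTriangle f y h k (N + 1)) :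
    VanishesOnTriangle (Δ_[h] f) y h k N := by
  intro i j hij
  have hshift : y + i • h + j • k + h = y + (i + 1) • h + j • k := by
    rw [succ_nsmul]; abel
  rw [fwdDiff, hshift, hf (i + 1) j (by omega), hf i j (by omega), sub_zero]

lemma fwdDiff_right (hf : VanishesOnTriangle f y h k (N + 1)) :
    VanishesOnTriangle (Δ_[k] f) y h k N := by
  intro i j hij
  have hshift : y + i • h + j • k + k = y + i • h + (j + 1) • k := by
    rw [succ_nsmul]; abel
  rw [fwdDiff, hshift, hf i (j + 1) (by omega), hf i j (by omega), sub_zero]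

lemma iterate_fwdDiff_left {m : ℕ} (hf : VanishesOnTriangle f y h k (N + m)) :
    VanishesOnTriangle (Δ_[h] ^[m] f) y h k N := by
  induction m generalizing f with
  | zero => exact hf
  | succ m ih => exact iterate_succ_apply _ m f ▸ ih (fwdDiff_left hf)

lemma iterate_fwdDiff_right {n : ℕ} (hf : VanishesOnTriangle f y h k (N + n)) :
    VanishesOnTriangle (Δ_[k] ^[n] f) y h k N := by
  induction n generalizing f with
  | zero => exact hf
  | succ n ih => exact iterate_succ_apply _ n f ▸ ih (fwdDiff_right hf)

lemma succ_of_fwdDiff (hf : VanishesOnTriangle f y h k N)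
    (hh : VanishesOnTriangle (Δ_[h] f) y h k N) (hk : VanishesOnTriangle (Δ_[k] f) y h k N) :
    VanishesOnTriangle f y h k (N + 1) := by
  rintro (_ | i) j hij
  · rcases j with _ | j
    · exact hf 0 0 (Nat.zero_le N)
    have hshift : y + (0 : ℕ) • h + (j + 1) • k = y + (0 : ℕ) • h + j • k + k := by
      rw [succ_nsmul]; abel
    rw [hshift, ← sub_add_cancel (f _) (f _), ← fwdDiff, hk 0 j (by omega), hf 0 j (by omega),
      add_zero]
  have hshift : y + (i + 1) • h + j • k = y + i • h + j • k + h := by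
    rw [succ_nsmul]; abel
  rw [hshift, ← sub_add_cancel (f _) (f _), ← fwdDiff, hh i j (by omega), hf i j (by omega),
    add_zero]

end VanishesOnTriangle

theorem vanishesOnTriangle_iff :
    VanishesOnTriangle f y h k N ↔
      ∀ m n : ℕ, m + n ≤ N → Δ_[h] ^[m] (Δ_[k] ^[n] f) y = 0 := by
  refine ⟨fun hf m n hmn => ?_, fun hf => ?_⟩
  · obtain ⟨l, rfl⟩ := Nat.exists_eq_add_of_le hmn
    have hk : VanishesOnTriangle (Δ_[k] ^[n] f) y h k (l + m) :=
      .iterate_fwdDiff_right (by rwa [show l + m + n = m + n + l by omega])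
    exact hk.iterate_fwdDiff_left.apply_base
  · induction N generalizing f with
    | zero =>
      intro i j hij
      obtain ⟨rfl, rfl⟩ : i = 0 ∧ j = 0 := by omega
      simpa using hf 0 0 le_rfl
    | succ N ih =>
      refine .succ_of_fwdDiff (ih fun m n hmn => hf m n (by omega)) (ih fun m n hmn => ?_)
        (ih fun m n hmn => ?_)
      · have := hf (m + 1) n (by omega)
        rwa [iterate_succ_apply, ← iterate_one (Δ_[h]), ← fwdDiff_iter_comm] at this
      · simpa only [← iterate_succ_apply] using hf m (n + 1) (by omega)

end Triangle

section Product

variable {M N G : Type*} [AddCommMonoid M] [AddCommMonoid N] [AddCommGroup G]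

lemma fwdDiff_iter_inl_apply (h : M) (F : M × N → G) (m : ℕ) (s : M × N) :
    Δ_[(h, (0 : N))] ^[m] F s = Δ_[h] ^[m] (fun x => F (x, s.2)) s.1 := by
  induction m generalizing F with
  | zero => rfl
  | succ m ih =>
    have hΔ : (fun x => Δ_[(h, 0)] F (x, s.2)) = Δ_[h] fun x => F (x, s.2) := by
      ext x; simp [fwdDiff]
    rw [iterate_succ_apply, ih, hΔ, iterate_succ_apply]

lemma fwdDiff_iter_inr_apply (k : N) (F : M × N → G) (n : ℕ) (s : M × N) :
    Δ_[((0 : M), k)] ^[n] F s = Δ_[k] ^[n] (fun y => F (s.1, y)) s.2 := by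
  induction n generalizing F with
  | zero => rfl
  | succ n ih =>
    have hΔ : (fun y => Δ_[(0, k)] F (s.1, y)) = Δ_[k] fun y => F (s.1, y) := by
      ext y; simp [fwdDiff]
    rw [iterate_succ_apply, ih, hΔ, iterate_succ_apply]

end Product

section Monomial

variable {R G : Type*} [CommRing R] [AddCommGroup G] [Module R G]

lemma fwdDiff_iter_inl_monomial_smul_eq_zero {a m : ℕ} (ha : a < m) (b : ℕ) (w : G) :
    Δ_[((1 : R), (0 : R))] ^[m] (fun s : R × R => (s.1 ^ a * s.2 ^ b) • w) = 0 := by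
  ext s
  simp only [fwdDiff_iter_inl_apply, mul_smul]
  rw [fwdDiff_iter_smul_const, fwdDiff_iter_pow_eq_zero_of_lt ha]
  simp

lemma fwdDiff_iter_inr_monomial_smul_eq_zero (a : ℕ) {b n : ℕ} (hb : b < n) (w : G) :
    Δ_[((0 : R), (1 : R))] ^[n] (fun s : R × R => (s.1 ^ a * s.2 ^ b) • w) = 0 := by
  ext s
  simp only [fwdDiff_iter_inr_apply, mul_comm _ (_ ^ b), mul_smul]
  rw [fwdDiff_iter_smul_const, fwdDiff_iter_pow_eq_zero_of_lt hb]
  simp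

lemma fwdDiff_iter_iter_monomial_smul_eq_zero {a b m n : ℕ} (habmn : a + b < m + n) (w : G) :
    Δ_[((1 : R), (0 : R))] ^[m]
      (Δ_[((0 : R), (1 : R))] ^[n] (fun s : R × R => (s.1 ^ a * s.2 ^ b) • w)) = 0 := by
  rcases lt_or_ge a m with ha | hma
  · rw [fwdDiff_iter_comm, fwdDiff_iter_inl_monomial_smul_eq_zero ha, fwdDiff_iter_zero]
  · rw [fwdDiff_iter_inr_monomial_smul_eq_zero a (by omega), fwdDiff_iter_zero]

lemma fwdDiff_iter_iter_sum_monomial_smul_eq_zero {K m n : ℕ} (hmn : K < m + n)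
    (T : Finset (ℕ × ℕ)) (hT : ∀ k ∈ T, k.1 + k.2 ≤ K) (v : ℕ × ℕ → G) :
    Δ_[((1 : R), (0 : R))] ^[m] (Δ_[((0 : R), (1 : R))] ^[n]
      (fun s : R × R => ∑ k ∈ T, (s.1 ^ k.1 * s.2 ^ k.2) • v k)) = 0 := by
  rw [← sum_fn, fwdDiff_iter_finsetSum, fwdDiff_iter_finsetSum]
  exact sum_eq_zero fun k hk => fwdDiff_iter_iter_monomial_smul_eq_zero ((hT k hk).trans_lt hmn) _

end Monomial

theorem stmt_5_general {V : Type*} [AddCommGroup V]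
    (f : ℤ × ℤ → V) (r : ℤ × ℤ) (K : ℕ)
    (hf : ∀ m n : ℕ, K < m + n → (ddx^[m] (ddy^[n] f)) r = 0)
    (v : ℕ × ℕ → V) (p : ℤ × ℤ → V)
    (hp : ∀ s : ℤ × ℤ, p s =
      ∑ k ∈ Finset.filter (fun k : ℕ × ℕ => k.1 + k.2 ≤ K)
          (Finset.range (K + 1) ×ˢ Finset.range (K + 1)),
        (s.1 ^ k.1 * s.2 ^ k.2) • v k)
    (hagree : ∀ i j : ℕ, i + j ≤ K → p (r.1 + i, r.2 + j) = f (r.1 + i, r.2 + j)) :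
    ∀ s : ℤ × ℤ, r.1 ≤ s.1 → r.2 ≤ s.2 → f s = p s := by
  rw [ddx_eq_fwdDiff, ddy_eq_fwdDiff] at hf
  have hcoord (i j : ℕ) :
      r + i • ((1 : ℤ), (0 : ℤ)) + j • ((0 : ℤ), (1 : ℤ)) = (r.1 + i, r.2 + j) := by
    ext <;> simp
  have hp_high (m n : ℕ) (hmn : K < m + n) :
      Δ_[((1 : ℤ), (0 : ℤ))] ^[m] (Δ_[((0 : ℤ), (1 : ℤ))] ^[n] p) = 0 := by
    rw [funext hp]
    exact fwdDiff_iter_iter_sum_monomial_smul_eq_zero hmn _ (fun k hk => (mem_filter.1 hk).2) v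
  have hdiff (m n : ℕ) :
      Δ_[((1 : ℤ), (0 : ℤ))] ^[m] (Δ_[((0 : ℤ), (1 : ℤ))] ^[n] (f - p)) r = 0 := by
    rcases le_or_gt (m + n) K with hle | hlt
    · refine vanishesOnTriangle_iff.1 (fun i j hij => ?_) m n hle
      rw [Pi.sub_apply, hcoord, hagree i j hij, sub_self]
    · simp [fwdDiff_iter_sub, hf m n hlt, hp_high m n hlt]
  intro s h₁ h₂
  obtain ⟨a, ha⟩ := Int.eq_ofNat_of_zero_le (sub_nonneg.2 h₁)
  obtain ⟨b, hb⟩ := Int.eq_ofNat_of_zero_le (sub_nonneg.2 h₂)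
  have := vanishesOnTriangle_iff.2 (fun m n _ => hdiff m n) a b le_rfl
  rw [hcoord, ← ha, ← hb] at this
  simpa [sub_eq_zero] using this

theorem stmt_5 {V : Type*} [AddCommGroup V] [Module ℂ V]
    (f : ℤ × ℤ → V) (r : ℤ × ℤ) (K : ℕ)
    (hf : ∀ m n : ℕ, K < m + n → (ddx^[m] (ddy^[n] f)) r = 0)
    (v : ℕ × ℕ → V) (p : ℤ × ℤ → V)
    (hp : ∀ s : ℤ × ℤ, p s =
      ∑ k ∈ Finset.filter (fun k : ℕ × ℕ => k.1 + k.2 ≤ K)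
          (Finset.range (K + 1) ×ˢ Finset.range (K + 1)),
        (s.1 ^ k.1 * s.2 ^ k.2) • v k)
    (hagree : ∀ i j : ℕ, i + j ≤ K → p (r.1 + i, r.2 + j) = f (r.1 + i, r.2 + j)) :
    ∀ s : ℤ × ℤ, r.1 ≤ s.1 → r.2 ≤ s.2 → f s = p s :=
  stmt_5_general f r K hf v p hp hagree
end

section
/- Each operator S_{ab}(k) is a derivation of ℂ[x₁, …, x_N], and for all q, k ∈ ℤ_{≥0}^N and all a, b, c, d ∈ {1, …, N} the commutator satisfies [S_{ab}(q), S_{cd}(k)] = q_b k_c S_{ad}(q+k−e_b−e_c) − q_b k_d S_{ac}(q+k−e_b−e_d) − q_a k_c S_{bd}(q+k−e_a−e_c) + q_a k_d S_{bc}(q+k−e_a−e_d), where any term whose scalar coefficient is zero is understood to be zero (so the shifted multi-index is only evaluated when the coefficient is nonzero, in which case it lies in ℤ_{≥0}^N). -/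
open MvPolynomial

/-- The divergence-zero vector field
`S_{ab}(k) = k_b x^{k-e_b} ∂/∂x_a − k_a x^{k-e_a} ∂/∂x_b`,
as a derivation of `ℂ[x₁, …, x_N]`. -/
noncomputable def Sab (N : ℕ) (a b : Fin N) (k : Fin N →₀ ℕ) :
    Derivation ℂ (MvPolynomial (Fin N) ℂ) (MvPolynomial (Fin N) ℂ) :=
  (monomial (k - Finsupp.single b 1) ((k b : ℂ))) • pderiv a
    - (monomial (k - Finsupp.single a 1) ((k a : ℂ))) • pderiv b

/-
Writing `x^k` for `monomial k 1`, one has `S_{ab}(k) = (∂_b x^k) • ∂_a − (∂_a x^k) • ∂_b` and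
`q_b k_c x^{q+k−e_b−e_c} = ∂_b x^q · ∂_c x^k`. Since partial derivatives commute,
`⁅u • ∂_a, v • ∂_c⁆ = (u ∂_a v) • ∂_c − (v ∂_c u) • ∂_a`. Expanding the left side of the
commutator identity this way and the right side by the Leibniz rule turns both into the same
combination of the `∂_i`, once `∂_a ∂_b x^q = ∂_b ∂_a x^q` is used.
-/

lemma Finsupp.tsub_single_add_tsub_single {σ : Type*} (q k : σ →₀ ℕ) (b c : σ)
    (hb : q b ≠ 0) (hc : k c ≠ 0) :
    (q - single b 1) + (k - single c 1) = q + k - single b 1 - single c 1 := by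
  ext x
  classical
  simp only [add_apply, tsub_apply, single_apply]
  split_ifs <;> subst_vars <;> omega

lemma Derivation.lie_smul_smul {R A : Type*} [CommRing R] [CommRing A] [Algebra R A]
    (D E : Derivation R A A) (u v : A) :
    ⁅u • D, v • E⁆ = (u * D v) • E - (v * E u) • D + (u * v) • ⁅D, E⁆ := by
  ext x
  simp only [commutator_apply, add_apply, sub_apply, smul_apply, smul_eq_mul, leibniz]
  ring

/- `sub_lie` and `lie_sub` fail to rewrite on derivations of `MvPolynomial σ R` (their `Module R`
instance differs from the one the Lie ring structure expects); stated for `Derivation`, this does. -/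
lemma Derivation.sub_lie_sub {R A : Type*} [CommRing R] [CommRing A] [Algebra R A]
    (D₁ D₂ E₁ E₂ : Derivation R A A) :
    ⁅D₁ - D₂, E₁ - E₂⁆ = ⁅D₁, E₁⁆ - ⁅D₁, E₂⁆ - ⁅D₂, E₁⁆ + ⁅D₂, E₂⁆ := by
  rw [sub_lie, lie_sub, lie_sub]
  abel

namespace MvPolynomial

variable {σ R : Type*}

local notation "∂[" R "] " i => (pderiv i : Derivation R (MvPolynomial σ R) (MvPolynomial σ R))

lemma pderiv_monomial_one_mul_pderiv_monomial_one [CommSemiring R] (q k : σ →₀ ℕ) (b c : σ) :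
    pderiv b (monomial q (1 : R)) * pderiv c (monomial k (1 : R))
      = ((q b * k c : ℕ) : R) • monomial (q + k - Finsupp.single b 1 - Finsupp.single c 1) 1 := by
  rw [pderiv_monomial, pderiv_monomial, monomial_mul, smul_monomial]
  rcases eq_or_ne (q b) 0 with hb | hb
  · simp [hb]
  rcases eq_or_ne (k c) 0 with hc | hc
  · simp [hc]
  rw [Finsupp.tsub_single_add_tsub_single q k b c hb hc]
  push_cast
  ring_nf

lemma pderiv_pderiv_comm [CommSemiring R] (i j : σ) (p : MvPolynomial σ R) :
    pderiv i (pderiv j p) = pderiv j (pderiv i p) := by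
  induction p using MvPolynomial.induction_on' with
  | monomial s r =>
    rcases eq_or_ne i j with rfl | hij
    · rfl
    have hsi : (s - Finsupp.single j 1 : σ →₀ ℕ) i = s i := by simp [hij.symm]
    have hsj : (s - Finsupp.single i 1 : σ →₀ ℕ) j = s j := by simp [hij]
    simp only [pderiv_monomial, hsi, hsj, tsub_right_comm (a := s)]
    ring_nf
  | add p q hp hq => simp [hp, hq]

lemma lie_pderiv_pderiv [CommRing R] (i j : σ) :
    ⁅∂[R] i, ∂[R] j⁆ = 0 := by
  ext p
  simp [Derivation.commutator_apply, pderiv_pderiv_comm (R := R) i j]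

lemma lie_smul_pderiv_smul_pderiv [CommRing R] (i j : σ) (u v : MvPolynomial σ R) :
    ⁅u • ∂[R] i, v • ∂[R] j⁆
      = (u * pderiv i v) • pderiv j - (v * pderiv j u) • pderiv i := by
  rw [Derivation.lie_smul_smul, lie_pderiv_pderiv, smul_zero, add_zero]

end MvPolynomial

variable {N : ℕ}

lemma Sab_eq_smul_pderiv_sub (a b : Fin N) (k : Fin N →₀ ℕ) :
    Sab N a b k = pderiv b (monomial k (1 : ℂ)) • pderiv a
      - pderiv a (monomial k (1 : ℂ)) • pderiv b := by
  rw [Sab, pderiv_monomial, pderiv_monomial, one_mul, one_mul]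

lemma Sab_apply_monomial (a b : Fin N) (k m : Fin N →₀ ℕ) :
    Sab N a b k (monomial m (1 : ℂ)) =
      (((k b * m a : ℕ) : ℂ) - ((k a * m b : ℕ) : ℂ)) •
        monomial (m + k - Finsupp.single a 1 - Finsupp.single b 1) (1 : ℂ) := by
  simp only [Sab_eq_smul_pderiv_sub, Derivation.sub_apply, Derivation.smul_apply, smul_eq_mul,
    pderiv_monomial_one_mul_pderiv_monomial_one, sub_smul, add_comm k m, tsub_right_comm]

lemma natCast_mul_smul_Sab (x y a d : Fin N) (q k : Fin N →₀ ℕ) :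
    ((q x * k y : ℕ) : ℂ) • Sab N a d (q + k - Finsupp.single x 1 - Finsupp.single y 1)
      = pderiv d (pderiv x (monomial q (1 : ℂ)) * pderiv y (monomial k 1)) • pderiv a
        - pderiv a (pderiv x (monomial q (1 : ℂ)) * pderiv y (monomial k 1)) • pderiv d := by
  rw [Sab_eq_smul_pderiv_sub, smul_sub, ← smul_assoc, ← smul_assoc, ← Derivation.map_smul,
    ← Derivation.map_smul, ← pderiv_monomial_one_mul_pderiv_monomial_one]

theorem stmt_12_general (N : ℕ) (a b c d : Fin N) (q k m : Fin N →₀ ℕ) :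
    (Sab N a b k) (monomial m (1 : ℂ)) =
      (((k b * m a : ℕ) : ℂ) - ((k a * m b : ℕ) : ℂ)) •
        monomial (m + k - Finsupp.single a 1 - Finsupp.single b 1) (1 : ℂ) ∧
    ⁅Sab N a b q, Sab N c d k⁆ =
      ((q b * k c : ℕ) : ℂ) • Sab N a d (q + k - Finsupp.single b 1 - Finsupp.single c 1)
      - ((q b * k d : ℕ) : ℂ) • Sab N a c (q + k - Finsupp.single b 1 - Finsupp.single d 1)
      - ((q a * k c : ℕ) : ℂ) • Sab N b d (q + k - Finsupp.single a 1 - Finsupp.single c 1)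
      + ((q a * k d : ℕ) : ℂ) • Sab N b c (q + k - Finsupp.single a 1 - Finsupp.single d 1) := by
  refine ⟨Sab_apply_monomial a b k m, ?_⟩
  simp only [natCast_mul_smul_Sab, Sab_eq_smul_pderiv_sub a b q, Sab_eq_smul_pderiv_sub c d k]
  rw [Derivation.sub_lie_sub]
  simp only [lie_smul_pderiv_smul_pderiv, pderiv_mul,
    pderiv_pderiv_comm b a (monomial q (1 : ℂ)), pderiv_pderiv_comm d c (monomial k (1 : ℂ))]
  module

theorem stmt_12 (N : ℕ) (hN : 2 ≤ N) (a b c d : Fin N) (q k m : Fin N →₀ ℕ) :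
    (Sab N a b k) (monomial m (1 : ℂ)) =
      (((k b * m a : ℕ) : ℂ) - ((k a * m b : ℕ) : ℂ)) •
        monomial (m + k - Finsupp.single a 1 - Finsupp.single b 1) (1 : ℂ) ∧
    ⁅Sab N a b q, Sab N c d k⁆ =
      ((q b * k c : ℕ) : ℂ) • Sab N a d (q + k - Finsupp.single b 1 - Finsupp.single c 1)
      - ((q b * k d : ℕ) : ℂ) • Sab N a c (q + k - Finsupp.single b 1 - Finsupp.single d 1)
      - ((q a * k c : ℕ) : ℂ) • Sab N b d (q + k - Finsupp.single a 1 - Finsupp.single c 1)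
      + ((q a * k d : ℕ) : ℂ) • Sab N b c (q + k - Finsupp.single a 1 - Finsupp.single d 1) :=
  stmt_12_general N a b c d q k m
end
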